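/- arXiv:2601.13291 — 2 statements merged into one kernel-verified Lean document; each statement's English description precedes it below -/
import Mathlib

section
/- Let T > 0 and m ∈ ℝ with m ≠ 0 and |m| ≠ (kπ/T)² for every k ∈ ℕ. Then the constant function v₀(t) = 1/m is the unique solution of v''(t) + m·v(-t) = 1 on [-T,T] with boundary conditions v(T) = v(-T) and v'(-T) = v'(T). -/
/-!
Subtracting the constant solution `1/m` and splitting `w = v - 1/m` into its even and odd parts
`f` and `g` decouples the reflected equation `w'' (t) + m w(-t) = 0` into `f'' = -m f` and
`g'' = m g`. On `[0, T]` the periodic boundary conditions become the Neumann conditions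
`f'(0) = f'(T) = 0` and the Dirichlet conditions `g(0) = g(T) = 0`. Writing the solutions in terms
of `cos, sin` or `cosh, sinh`, these force `f = g = 0` unless `|m|` is one of the eigenvalues
`(kπ/T)²`.
-/

/-- `v` is a solution of `v''(t) + m v(-t) = 1` on `[-T,T]` with periodic
boundary conditions. -/
def IsSolS2 (T m : ℝ) (v : ℝ → ℝ) : Prop :=
  ContDiffOn ℝ 2 v (Set.Icc (-T) T) ∧
  (∀ t ∈ Set.Icc (-T) T,
    iteratedDerivWithin 2 v (Set.Icc (-T) T) t + m * v (-t) = 1) ∧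
  v T = v (-T) ∧
  derivWithin v (Set.Icc (-T) T) (-T) = derivWithin v (Set.Icc (-T) T) T

open Set Real

theorem constant_of_hasDerivWithinAt_Icc_zero {a b : ℝ} {f : ℝ → ℝ}
    (hf : ∀ x ∈ Icc a b, HasDerivWithinAt f 0 (Icc a b) x) :
    ∀ x ∈ Icc a b, f x = f a :=
  constant_of_has_deriv_right_zero (fun x hx => (hf x hx).continuousWithinAt) fun x hx =>
    (hf x (Ico_subset_Icc_self hx)).mono_of_mem_nhdsWithin (Icc_mem_nhdsGE_of_mem hx)

section SecondOrder

variable {b ρ : ℝ} {y y₁ : ℝ → ℝ}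
  (hy : ∀ x ∈ Icc 0 b, HasDerivWithinAt y (y₁ x) (Icc 0 b) x)

include hy

theorem eq_cos_sin_of_hasDerivWithinAt (hρ : ρ ≠ 0)
    (hy₁ : ∀ x ∈ Icc 0 b, HasDerivWithinAt y₁ (-ρ ^ 2 * y x) (Icc 0 b) x) :
    ∀ x ∈ Icc 0 b, y x = y 0 * cos (ρ * x) + y₁ 0 / ρ * sin (ρ * x) ∧
      y₁ x = -(ρ * y 0) * sin (ρ * x) + y₁ 0 * cos (ρ * x) := by
  have hρx (x : ℝ) : HasDerivAt (ρ * ·) ρ x := by simpa using (hasDerivAt_id x).const_mul ρ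
  -- the coefficients of `y` in the basis `cos (ρ x), sin (ρ x)` are first integrals
  have hA := constant_of_hasDerivWithinAt_Icc_zero
    (f := fun x => y x * cos (ρ * x) - y₁ x / ρ * sin (ρ * x))
    fun x hx => (((hy x hx).mul ((hρx x).cos.hasDerivWithinAt)).sub
      (((hy₁ x hx).div_const ρ).mul (hρx x).sin.hasDerivWithinAt)).congr_deriv
      (by field_simp; ring)
  have hB := constant_of_hasDerivWithinAt_Icc_zero
    (f := fun x => y x * sin (ρ * x) + y₁ x / ρ * cos (ρ * x))
    fun x hx => (((hy x hx).mul ((hρx x).sin.hasDerivWithinAt)).add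
      (((hy₁ x hx).div_const ρ).mul (hρx x).cos.hasDerivWithinAt)).congr_deriv
      (by field_simp; ring)
  intro x hx
  have hAx := hA x hx
  have hBx := hB x hx
  simp only [mul_zero, cos_zero, sin_zero, mul_one, sub_zero, zero_add] at hAx hBx
  have hsc := sin_sq_add_cos_sq (ρ * x)
  have hy₁x : y₁ x / ρ = -(y 0 * sin (ρ * x)) + y₁ 0 / ρ * cos (ρ * x) := by
    linear_combination cos (ρ * x) * hBx - sin (ρ * x) * hAx - y₁ x / ρ * hsc
  refine ⟨by linear_combination cos (ρ * x) * hAx + sin (ρ * x) * hBx - y x * hsc, ?_⟩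
  field_simp at hy₁x
  linear_combination hy₁x

theorem eq_cosh_sinh_of_hasDerivWithinAt (hρ : ρ ≠ 0)
    (hy₁ : ∀ x ∈ Icc 0 b, HasDerivWithinAt y₁ (ρ ^ 2 * y x) (Icc 0 b) x) :
    ∀ x ∈ Icc 0 b, y x = y 0 * cosh (ρ * x) + y₁ 0 / ρ * sinh (ρ * x) ∧
      y₁ x = ρ * y 0 * sinh (ρ * x) + y₁ 0 * cosh (ρ * x) := by
  have hρx (x : ℝ) : HasDerivAt (ρ * ·) ρ x := by simpa using (hasDerivAt_id x).const_mul ρ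
  have hA := constant_of_hasDerivWithinAt_Icc_zero
    (f := fun x => y x * cosh (ρ * x) - y₁ x / ρ * sinh (ρ * x))
    fun x hx => (((hy x hx).mul ((hρx x).cosh.hasDerivWithinAt)).sub
      (((hy₁ x hx).div_const ρ).mul (hρx x).sinh.hasDerivWithinAt)).congr_deriv
      (by field_simp; ring)
  have hB := constant_of_hasDerivWithinAt_Icc_zero
    (f := fun x => y₁ x / ρ * cosh (ρ * x) - y x * sinh (ρ * x))
    fun x hx => ((((hy₁ x hx).div_const ρ).mul (hρx x).cosh.hasDerivWithinAt).sub
      ((hy x hx).mul ((hρx x).sinh.hasDerivWithinAt))).congr_deriv (by field_simp; ring)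
  intro x hx
  have hAx := hA x hx
  have hBx := hB x hx
  simp only [mul_zero, cosh_zero, sinh_zero, mul_one, sub_zero] at hAx hBx
  have hcs := cosh_sq_sub_sinh_sq (ρ * x)
  have hy₁x : y₁ x / ρ = y 0 * sinh (ρ * x) + y₁ 0 / ρ * cosh (ρ * x) := by
    linear_combination sinh (ρ * x) * hAx + cosh (ρ * x) * hBx - y₁ x / ρ * hcs
  refine ⟨by linear_combination cosh (ρ * x) * hAx + sinh (ρ * x) * hBx - y x * hcs, ?_⟩
  field_simp at hy₁x
  linear_combination hy₁x

end SecondOrder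

theorem sin_sqrt_mul_ne_zero {T μ : ℝ} (hT : 0 < T) (hμ : 0 < μ)
    (hres : ∀ k : ℕ, μ ≠ (k * π / T) ^ 2) : sin (√μ * T) ≠ 0 := by
  intro h
  obtain ⟨n, hn⟩ := sin_eq_zero_iff.1 h
  have hpos : 0 < (n : ℝ) * π := hn ▸ mul_pos (sqrt_pos.2 hμ) hT
  lift n to ℕ using by exact_mod_cast (pos_of_mul_pos_left hpos pi_pos.le).le
  apply hres n
  rw [Int.cast_natCast] at hn
  rw [hn, mul_div_cancel_right₀ _ hT.ne', sq_sqrt hμ.le]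

section BoundaryValue

variable {T μ : ℝ} {y y₁ : ℝ → ℝ}
  (hT : 0 < T) (hμ : ∀ k : ℕ, μ ≠ (k * π / T) ^ 2)
  (hy : ∀ x ∈ Icc 0 T, HasDerivWithinAt y (y₁ x) (Icc 0 T) x)
  (hy₁ : ∀ x ∈ Icc 0 T, HasDerivWithinAt y₁ (-μ * y x) (Icc 0 T) x)

include hT hμ hy hy₁

theorem eqOn_zero_of_neumann (hy₁0 : y₁ 0 = 0) (hy₁T : y₁ T = 0) :
    ∀ x ∈ Icc 0 T, y x = 0 := by
  have hTmem : T ∈ Icc 0 T := right_mem_Icc.2 hT.le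
  rcases lt_trichotomy μ 0 with hneg | rfl | hpos
  · have hρ : 0 < √(-μ) := sqrt_pos.2 (neg_pos.2 hneg)
    have hsol := eq_cosh_sinh_of_hasDerivWithinAt hy hρ.ne' fun x hx =>
      (hy₁ x hx).congr_deriv (by rw [sq_sqrt (neg_nonneg.2 hneg.le)])
    have hsinh : sinh (√(-μ) * T) ≠ 0 := (sinh_pos_iff.2 (mul_pos hρ hT)).ne'
    have hy0 : y 0 = 0 := by
      have := (hsol T hTmem).2
      rw [hy₁0, hy₁T] at this
      simpa [hρ.ne', hsinh] using this
    intro x hx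
    simp [(hsol x hx).1, hy0, hy₁0]
  · exact absurd (by simp) (hμ 0)
  · have hρ : 0 < √μ := sqrt_pos.2 hpos
    have hsol := eq_cos_sin_of_hasDerivWithinAt hy hρ.ne' fun x hx =>
      (hy₁ x hx).congr_deriv (by rw [sq_sqrt hpos.le])
    have hsin := sin_sqrt_mul_ne_zero hT hpos hμ
    have hy0 : y 0 = 0 := by
      have := (hsol T hTmem).2
      rw [hy₁0, hy₁T] at this
      simpa [hρ.ne', hsin] using this
    intro x hx
    simp [(hsol x hx).1, hy0, hy₁0]

theorem eqOn_zero_of_dirichlet (hy0 : y 0 = 0) (hyT : y T = 0) :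
    ∀ x ∈ Icc 0 T, y x = 0 := by
  have hTmem : T ∈ Icc 0 T := right_mem_Icc.2 hT.le
  rcases lt_trichotomy μ 0 with hneg | rfl | hpos
  · have hρ : 0 < √(-μ) := sqrt_pos.2 (neg_pos.2 hneg)
    have hsol := eq_cosh_sinh_of_hasDerivWithinAt hy hρ.ne' fun x hx =>
      (hy₁ x hx).congr_deriv (by rw [sq_sqrt (neg_nonneg.2 hneg.le)])
    have hsinh : sinh (√(-μ) * T) ≠ 0 := (sinh_pos_iff.2 (mul_pos hρ hT)).ne'
    have hy₁0 : y₁ 0 = 0 := by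
      have := (hsol T hTmem).1
      rw [hy0, hyT] at this
      simpa [hρ.ne', hsinh] using this
    intro x hx
    simp [(hsol x hx).1, hy₁0, hy0]
  · exact absurd (by simp) (hμ 0)
  · have hρ : 0 < √μ := sqrt_pos.2 hpos
    have hsol := eq_cos_sin_of_hasDerivWithinAt hy hρ.ne' fun x hx =>
      (hy₁ x hx).congr_deriv (by rw [sq_sqrt hpos.le])
    have hsin := sin_sqrt_mul_ne_zero hT hpos hμ
    have hy₁0 : y₁ 0 = 0 := by
      have := (hsol T hTmem).1
      rw [hy0, hyT] at this
      simpa [hρ.ne', hsin] using this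
    intro x hx
    simp [(hsol x hx).1, hy₁0, hy0]

end BoundaryValue

section Reflection

variable {T : ℝ} {f f' : ℝ → ℝ}

theorem neg_mem_Icc_neg_self {x : ℝ} (hx : x ∈ Icc (-T) T) : -x ∈ Icc (-T) T :=
  ⟨neg_le_neg hx.2, neg_le.1 hx.1⟩

variable (hf : ∀ x ∈ Icc (-T) T, HasDerivWithinAt f (f' x) (Icc (-T) T) x)
include hf

theorem hasDerivWithinAt_comp_neg_Icc :
    ∀ x ∈ Icc (-T) T, HasDerivWithinAt (fun t => f (-t)) (-f' (-x)) (Icc (-T) T) x :=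
  fun x hx => ((hf (-x) (neg_mem_Icc_neg_self hx)).comp x (hasDerivAt_neg x).hasDerivWithinAt
    fun _ => neg_mem_Icc_neg_self).congr_deriv (mul_neg_one _)

theorem hasDerivWithinAt_add_comp_neg_Icc :
    ∀ x ∈ Icc (-T) T,
      HasDerivWithinAt (fun t => f t + f (-t)) (f' x - f' (-x)) (Icc (-T) T) x :=
  fun x hx => ((hf x hx).add (hasDerivWithinAt_comp_neg_Icc hf x hx)).congr_deriv
    (sub_eq_add_neg _ _).symm

theorem hasDerivWithinAt_sub_comp_neg_Icc :
    ∀ x ∈ Icc (-T) T,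
      HasDerivWithinAt (fun t => f t - f (-t)) (f' x + f' (-x)) (Icc (-T) T) x :=
  fun x hx => ((hf x hx).sub (hasDerivWithinAt_comp_neg_Icc hf x hx)).congr_deriv
    (sub_neg_eq_add _ _)

end Reflection

theorem isSolS2_const {T m : ℝ} (hm : m ≠ 0) : IsSolS2 T m fun _ => 1 / m :=
  ⟨contDiffOn_const, fun _ _ => by simp [iteratedDerivWithin_const, hm], rfl, by simp⟩

theorem IsSolS2.hasDerivWithinAt {T m : ℝ} {v : ℝ → ℝ} (hT : 0 < T) (hv : IsSolS2 T m v) :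
    ∀ t ∈ Icc (-T) T,
      HasDerivWithinAt v (derivWithin v (Icc (-T) T) t) (Icc (-T) T) t ∧
      HasDerivWithinAt (derivWithin v (Icc (-T) T)) (1 - m * v (-t)) (Icc (-T) T) t := by
  obtain ⟨hsmooth, hode, -, -⟩ := hv
  have hus : UniqueDiffOn ℝ (Icc (-T) T) := uniqueDiffOn_Icc (by linarith)
  have hv₁ : DifferentiableOn ℝ (derivWithin v (Icc (-T) T)) (Icc (-T) T) :=
    (hsmooth.derivWithin hus (m := 1) (by norm_num)).differentiableOn one_ne_zero
  intro t ht
  refine ⟨(hsmooth.differentiableOn (by norm_num) t ht).hasDerivWithinAt,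
    (hv₁ t ht).hasDerivWithinAt.congr_deriv ?_⟩
  have := hode t ht
  rw [iteratedDerivWithin_eq_iterate] at this
  simp only [Function.iterate_succ, Function.iterate_zero, Function.comp_apply, id] at this
  linarith

theorem stmt2_general (T m : ℝ) (hT : 0 < T)
    (hres : ∀ k : ℕ, |m| ≠ (k * Real.pi / T) ^ 2) :
    IsSolS2 T m (fun _ => 1 / m) ∧
    ∀ v : ℝ → ℝ, IsSolS2 T m v → ∀ t ∈ Set.Icc (-T) T, v t = 1 / m := by
  have hm : m ≠ 0 := fun h => hres 0 (by simp [h])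
  refine ⟨isSolS2_const hm, fun v hv => ?_⟩
  have hsub : Icc 0 T ⊆ Icc (-T) T := Icc_subset_Icc_left (by linarith)
  have hv₀ := fun t ht => (hv.hasDerivWithinAt hT t ht).1
  have hv₁ := fun t ht => (hv.hasDerivWithinAt hT t ht).2
  obtain ⟨-, -, hvT, hv₁T⟩ := hv
  have heven : ∀ x ∈ Icc 0 T, v x + v (-x) - 2 / m = 0 :=
    eqOn_zero_of_neumann (μ := m) hT (fun k h => hres k (by rw [h, abs_sq]))
      (fun x hx => ((hasDerivWithinAt_add_comp_neg_Icc hv₀ x (hsub hx)).sub_const _).mono hsub)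
      (fun x hx => ((hasDerivWithinAt_sub_comp_neg_Icc hv₁ x (hsub hx)).mono hsub).congr_deriv
        (by rw [neg_neg]; field_simp; ring))
      (by simp) (by simp [hv₁T])
  have hodd : ∀ x ∈ Icc 0 T, v x - v (-x) = 0 :=
    eqOn_zero_of_dirichlet (μ := -m) hT (fun k h => hres k (by rw [← abs_neg, h, abs_sq]))
      (fun x hx => (hasDerivWithinAt_sub_comp_neg_Icc hv₀ x (hsub hx)).mono hsub)
      (fun x hx => ((hasDerivWithinAt_add_comp_neg_Icc hv₁ x (hsub hx)).mono hsub).congr_deriv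
        (by rw [neg_neg]; ring))
      (by simp) (by simp [hvT])
  have hpos : ∀ x ∈ Icc 0 T, v x = 1 / m ∧ v (-x) = 1 / m := fun x hx =>
    ⟨by linear_combination (heven x hx + hodd x hx) / 2,
      by linear_combination (heven x hx - hodd x hx) / 2⟩
  intro t ht
  rcases le_total 0 t with h | h
  · exact (hpos t ⟨h, ht.2⟩).1
  · simpa using (hpos (-t) ⟨neg_nonneg.2 h, neg_le.1 ht.1⟩).2

theorem stmt2 (T m : ℝ) (hT : 0 < T) (hm : m ≠ 0)
    (hres : ∀ k : ℕ, |m| ≠ (k * Real.pi / T) ^ 2) :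
    IsSolS2 T m (fun _ => 1 / m) ∧
    ∀ v : ℝ → ℝ, IsSolS2 T m v → ∀ t ∈ Set.Icc (-T) T, v t = 1 / m :=
  stmt2_general T m hT hres
end

section
/- Let T ∈ (0,1] and m ∈ (0,(π/(2T))²). Then M = m/(sec(√m T) − 1) is a Dirichlet eigenvalue of the problem z''(t) = −m z(−t) − M z(0) on [-T,T] with z(−T)=z(T)=0; i.e., there exists a nontrivial z ∈ C²([-T,T]) satisfying the equation and boundary conditions with this value of M. -/
/-!
The witness is `z t = cos (√m t) - cos (√m T)`. It vanishes at `±T` and is even, so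
`z(-t) = z(t)` and `z'' + m z(-t) = -m cos (√m T)` is constant. The term `M z(0)` equals
`M (1 - cos (√m T))`, which cancels that constant exactly when `M = m / (sec (√m T) - 1)`;
the condition `√m T < π/2` keeps `cos (√m T)` in `(0, 1)`, so `M` is well defined and `z ≠ 0`.
-/

open Real Set

theorem iteratedDeriv_two_cos_mul_sub_const (k c : ℝ) :
    iteratedDeriv 2 (fun t => cos (k * t) - c) = fun t => -k ^ 2 * cos (k * t) := by
  funext t
  have hcos₂ : iteratedDeriv 2 cos = -cos := by simp
  have hcos : ContDiff ℝ 2 fun t => cos (k * t) := by fun_prop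
  rw [iteratedDeriv_fun_sub hcos.contDiffAt contDiffAt_const, iteratedDeriv_const,
    iteratedDeriv_comp_const_mul contDiff_cos, hcos₂]
  simp

theorem cos_mem_Ioo_zero_one {x : ℝ} (hx₀ : 0 < x) (hx₁ : x < π / 2) : cos x ∈ Ioo 0 1 :=
  ⟨cos_pos_of_mem_Ioo ⟨by linarith [pi_pos], hx₁⟩,
    cos_zero ▸ cos_lt_cos_of_nonneg_of_le_pi le_rfl (by linarith [pi_pos]) hx₀⟩

theorem sqrt_mul_lt_pi_div_two {T m : ℝ} (hT : 0 < T) (hm : m < (π / (2 * T)) ^ 2) :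
    √m * T < π / 2 := by
  have hk : √m < π / (2 * T) := (sqrt_lt' (by positivity)).2 hm
  calc √m * T < π / (2 * T) * T := mul_lt_mul_of_pos_right hk hT
    _ = π / 2 := by field_simp

theorem div_one_div_sub_one_mul_one_sub {c : ℝ} (hc₀ : c ≠ 0) (hc₁ : c ≠ 1) (m : ℝ) :
    m / (1 / c - 1) * (1 - c) = m * c := by
  field_simp

theorem stmt16_general (T m : ℝ) (hT : 0 < T)
    (hm : 0 < m) (hm2 : m < (Real.pi / (2 * T)) ^ 2) :
    ∃ z : ℝ → ℝ, ContDiffOn ℝ 2 z (Set.Icc (-T) T) ∧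
      (∃ t ∈ Set.Icc (-T) T, z t ≠ 0) ∧
      (∀ t ∈ Set.Icc (-T) T,
        iteratedDerivWithin 2 z (Set.Icc (-T) T) t =
          -m * z (-t) - (m / (1 / Real.cos (Real.sqrt m * T) - 1)) * z 0) ∧
      z (-T) = 0 ∧ z T = 0 := by
  set k := √m
  set c := cos (k * T)
  have hc : c ∈ Ioo 0 1 :=
    cos_mem_Ioo_zero_one (by positivity) (sqrt_mul_lt_pi_div_two hT hm2)
  have hz : ContDiff ℝ 2 fun t => cos (k * t) - c := by fun_prop
  refine ⟨fun t => cos (k * t) - c, hz.contDiffOn, ⟨0, ⟨by linarith, hT.le⟩, ?_⟩, ?_, ?_, ?_⟩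
  · simpa using sub_ne_zero.2 hc.2.ne'
  · intro t ht
    rw [iteratedDerivWithin_eq_iteratedDeriv (uniqueDiffOn_Icc (by linarith)) hz.contDiffAt ht,
      iteratedDeriv_two_cos_mul_sub_const]
    simp only [mul_neg, cos_neg, mul_zero, cos_zero]
    rw [div_one_div_sub_one_mul_one_sub hc.1.ne' hc.2.ne, sq_sqrt hm.le]
    ring
  · simp [c]
  · simp [c]

theorem stmt16 (T m : ℝ) (hT : 0 < T) (hT1 : T ≤ 1)
    (hm : 0 < m) (hm2 : m < (Real.pi / (2 * T)) ^ 2) :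
    ∃ z : ℝ → ℝ, ContDiffOn ℝ 2 z (Set.Icc (-T) T) ∧
      (∃ t ∈ Set.Icc (-T) T, z t ≠ 0) ∧
      (∀ t ∈ Set.Icc (-T) T,
        iteratedDerivWithin 2 z (Set.Icc (-T) T) t =
          -m * z (-t) - (m / (1 / Real.cos (Real.sqrt m * T) - 1)) * z 0) ∧
      z (-T) = 0 ∧ z T = 0 :=
  stmt16_general T m hT hm hm2
end
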